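/- For all x > 0 and all 0 < α < 1/2, Φ(x − z_{2α}) > Φ(x − z_α) + Φ(−x − z_α). -/

import Mathlib

open Real MeasureTheory Set

/-- Standard normal probability density function. -/
noncomputable def stdPhi (x : ℝ) : ℝ := (Real.sqrt (2 * Real.pi))⁻¹ * Real.exp (-x ^ 2 / 2)

/-- Standard normal cumulative distribution function. -/
noncomputable def stdPhiCDF (x : ℝ) : ℝ := ∫ t in Set.Iic x, stdPhi t

/-!
Put `G y = Φ(y - z_{2α}) - Φ(y - z_α) - Φ(-y - z_α)`. Then `G 0 = 2α - α - α = 0` and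
`G y → 0` as `y → ∞`. Dividing `G' y = φ(y - z_{2α}) - φ(y - z_α) + φ(y + z_α)` by `φ(y - z_α)`
leaves a sum of two decreasing exponentials minus `1`, so `G'` changes sign at most once on
`(0, ∞)`, from `+` to `-`. Hence `G` first increases from `0` and then decreases towards `0`, so
it is positive on `(0, ∞)`.
-/

open Filter Topology ProbabilityTheory

theorem pos_of_hasDerivAt_of_sign_strictAntiOn {f f' ψ : ℝ → ℝ}
    (hf : ∀ y, HasDerivAt f (f' y) y) (hf0 : f 0 = 0) (hf_tendsto : Tendsto f atTop (𝓝 0))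
    (hψ : StrictAntiOn ψ (Ioi 0)) (hpos : ∀ y > 0, 0 < ψ y → 0 < f' y)
    (hneg : ∀ y > 0, ψ y < 0 → f' y < 0) {x : ℝ} (hx : 0 < x) : 0 < f x := by
  have hcont : Continuous f := continuous_iff_continuousAt.2 fun y => (hf y).continuousAt
  rcases le_or_gt 0 (ψ x) with hψx | hψx
  · have hmono : StrictMonoOn f (Icc 0 x) := by
      refine strictMonoOn_of_hasDerivWithinAt_pos (convex_Icc 0 x) hcont.continuousOn
        (fun y _ => (hf y).hasDerivWithinAt) fun y hy => ?_
      rw [interior_Icc] at hy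
      exact hpos y hy.1 (hψx.trans_lt (hψ hy.1 hx hy.2))
    simpa [hf0] using hmono (left_mem_Icc.2 hx.le) (right_mem_Icc.2 hx.le) hx
  · have hanti : StrictAntiOn f (Ici x) := by
      refine strictAntiOn_of_hasDerivWithinAt_neg (convex_Ici x) hcont.continuousOn
        (fun y _ => (hf y).hasDerivWithinAt) fun y hy => ?_
      rw [interior_Ici] at hy
      exact hneg y (hx.trans hy) ((hψ hx (hx.trans hy) hy).trans hψx)
    have hlim : 0 ≤ f (x + 1) := le_of_tendsto hf_tendsto <| by
      filter_upwards [eventually_ge_atTop (x + 1)] with z hz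
      exact hanti.antitoneOn (by simp) (by simp; linarith) hz
    linarith [hanti self_mem_Ici (by simp : x ≤ x + 1) (lt_add_one x)]

theorem stdPhi_eq_gaussianPDFReal : stdPhi = gaussianPDFReal 0 1 := by
  ext x
  simp [stdPhi, gaussianPDFReal]

theorem stdPhi_pos (x : ℝ) : 0 < stdPhi x := by
  unfold stdPhi
  positivity

theorem stdPhi_neg (x : ℝ) : stdPhi (-x) = stdPhi x := by
  simp [stdPhi]

theorem stdPhi_add (u c : ℝ) : stdPhi (u + c) = stdPhi u * exp (-(c * u) - c ^ 2 / 2) := by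
  rw [stdPhi, stdPhi, mul_assoc, ← exp_add]
  ring_nf

theorem continuous_stdPhi : Continuous stdPhi := by
  unfold stdPhi
  fun_prop

theorem integrable_stdPhi : Integrable stdPhi := by
  simpa [stdPhi_eq_gaussianPDFReal] using integrable_gaussianPDFReal 0 1

theorem integral_stdPhi : ∫ x, stdPhi x = 1 := by
  simpa [stdPhi_eq_gaussianPDFReal] using
    integral_gaussianPDFReal_eq_one 0 one_ne_zero

theorem stdPhiCDF_eq_add_intervalIntegral (x : ℝ) :
    stdPhiCDF x = stdPhiCDF 0 + ∫ t in (0 : ℝ)..x, stdPhi t := by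
  rw [stdPhiCDF, stdPhiCDF, ← intervalIntegral.integral_Iic_sub_Iic
    integrable_stdPhi.integrableOn integrable_stdPhi.integrableOn]
  ring

theorem hasDerivAt_stdPhiCDF (x : ℝ) : HasDerivAt stdPhiCDF (stdPhi x) x := by
  rw [funext stdPhiCDF_eq_add_intervalIntegral]
  exact ((continuous_stdPhi.integral_hasStrictDerivAt 0 x).hasDerivAt).const_add _

theorem stdPhiCDF_strictMono : StrictMono stdPhiCDF :=
  strictMono_of_hasDerivAt_pos hasDerivAt_stdPhiCDF stdPhi_pos

theorem stdPhiCDF_neg (x : ℝ) : stdPhiCDF (-x) = 1 - stdPhiCDF x := by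
  have hreflect : stdPhiCDF x = ∫ t in Ioi (-x), stdPhi t := by
    rw [← integral_comp_neg_Iic]
    simp_rw [stdPhi_neg]
    rfl
  rw [hreflect, ← integral_stdPhi, ← intervalIntegral.integral_Iic_add_Ioi
    integrable_stdPhi.integrableOn integrable_stdPhi.integrableOn, stdPhiCDF]
  ring

theorem tendsto_stdPhiCDF_atTop : Tendsto stdPhiCDF atTop (𝓝 1) := by
  have h := tendsto_setIntegral_of_monotone (μ := volume) (f := stdPhi)
    (fun _ => measurableSet_Iic) (fun _ _ hrs => Iic_subset_Iic.2 hrs)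
    integrable_stdPhi.integrableOn
  rwa [iUnion_Iic, Measure.restrict_univ, integral_stdPhi] at h

theorem stdPhiCDF_lt_one (x : ℝ) : stdPhiCDF x < 1 :=
  (stdPhiCDF_strictMono (lt_add_one x)).trans_le
    (stdPhiCDF_strictMono.monotone.ge_of_tendsto tendsto_stdPhiCDF_atTop _)

theorem stdPhiCDF_pos (x : ℝ) : 0 < stdPhiCDF x := by
  have h := stdPhiCDF_neg (-x)
  rw [neg_neg] at h
  linarith [stdPhiCDF_lt_one (-x)]

theorem tendsto_stdPhiCDF_add_const_atTop (c : ℝ) :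
    Tendsto (fun y => stdPhiCDF (y + c)) atTop (𝓝 1) :=
  tendsto_stdPhiCDF_atTop.comp (tendsto_atTop_add_const_right _ c tendsto_id)

theorem hasDerivAt_stdPhiCDF_sub_sub_add (a b y : ℝ) :
    HasDerivAt (fun y => stdPhiCDF (y - b) - stdPhiCDF (y - a) + stdPhiCDF (y + a))
      (stdPhi (y - a) * (exp (-((a - b) * (y - a)) - (a - b) ^ 2 / 2) +
        exp (-(2 * a * (y - a)) - (2 * a) ^ 2 / 2) - 1)) y := by
  refine ((((hasDerivAt_stdPhiCDF _).comp_sub_const y b).sub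
    ((hasDerivAt_stdPhiCDF _).comp_sub_const y a)).add
    ((hasDerivAt_stdPhiCDF _).comp_add_const y a)).congr_deriv ?_
  rw [show y - b = y - a + (a - b) by ring, show y + a = y - a + 2 * a by ring,
    stdPhi_add, stdPhi_add]
  ring

theorem stdPhiCDF_zero : stdPhiCDF 0 = 1 / 2 := by
  have h := stdPhiCDF_neg 0
  rw [neg_zero] at h
  linarith

theorem key_inequality_general
    (α : ℝ)
    (za zb : ℝ) (hza : 1 - stdPhiCDF za = α) (hzb : 1 - stdPhiCDF zb = 2 * α)
    (x : ℝ) (hx : 0 < x) :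
    stdPhiCDF (x - zb) > stdPhiCDF (x - za) + stdPhiCDF (-x - za) := by
  have hzb_lt_za : zb < za :=
    stdPhiCDF_strictMono.lt_iff_lt.1 (by linarith [stdPhiCDF_lt_one za])
  have hza_pos : 0 < za :=
    stdPhiCDF_strictMono.lt_iff_lt.1 (by linarith [stdPhiCDF_zero, stdPhiCDF_pos zb])
  set G := fun y => stdPhiCDF (y - zb) - stdPhiCDF (y - za) + stdPhiCDF (y + za) - 1
  set ψ := fun y => exp (-((za - zb) * (y - za)) - (za - zb) ^ 2 / 2) +
    exp (-(2 * za * (y - za)) - (2 * za) ^ 2 / 2) - 1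
  have hG (y : ℝ) : HasDerivAt G (stdPhi (y - za) * ψ y) y :=
    (hasDerivAt_stdPhiCDF_sub_sub_add za zb y).sub_const 1
  have hψ : StrictAnti ψ := fun y z hyz => by
    have : 0 < za - zb := sub_pos.2 hzb_lt_za
    simp only [ψ]
    gcongr
  have hG0 : G 0 = 0 := by
    simp only [G, zero_sub, zero_add, stdPhiCDF_neg]
    linarith
  have hG_tendsto : Tendsto G atTop (𝓝 0) := by
    have h := (((tendsto_stdPhiCDF_add_const_atTop (-zb)).sub
      (tendsto_stdPhiCDF_add_const_atTop (-za))).add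
      (tendsto_stdPhiCDF_add_const_atTop za)).sub_const 1
    simpa [G, sub_eq_add_neg] using h
  have hGx : 0 < G x :=
    pos_of_hasDerivAt_of_sign_strictAntiOn hG hG0 hG_tendsto (hψ.strictAntiOn _)
      (fun _ _ h => mul_pos (stdPhi_pos _) h)
      (fun _ _ h => mul_neg_of_pos_of_neg (stdPhi_pos _) h) hx
  rw [show -x - za = -(x + za) by ring, stdPhiCDF_neg]
  linarith

theorem key_inequality
    (α : ℝ) (hα0 : 0 < α) (hα1 : α < 1 / 2)
    (za zb : ℝ) (hza : 1 - stdPhiCDF za = α) (hzb : 1 - stdPhiCDF zb = 2 * α)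
    (x : ℝ) (hx : 0 < x) :
    stdPhiCDF (x - zb) > stdPhiCDF (x - za) + stdPhiCDF (-x - za) :=
  key_inequality_general α za zb hza hzb x hx
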